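/- Let Ψ be a logarithmic growth function satisfying condition (⋆). Then there is a constant C>0 such that Ψ''(y) ≤ C·[Ψ'(y)]² for all y≥0; equivalently, Φ(t) ≳ t^{1/2}[Φ'(t)]^{1/2} as t→∞. -/

import Mathlib

open MeasureTheory Filter Asymptotics Set
open scoped ENNReal

noncomputable section

namespace FockHankel

variable {n : ℕ}

/-- Squared Euclidean norm `|z|²` on `ℂⁿ`. -/
def nsq (z : Fin n → ℂ) : ℝ := ∑ j, Complex.normSq (z j)

/-- The pairing `⟨z,w⟩ = ∑ j, z j * conj (w j)`. -/
def ip (z w : Fin n → ℂ) : ℂ := ∑ j, z j * (starRingEnd ℂ) (w j)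

/-- A logarithmic growth function: a `C³` function with `Ψ' > 0`, `Ψ'' ≥ 0`, `Ψ''' ≥ 0`
(and `Ψ ≥ 0`) on `[0,∞)`. -/
structure IsLogGrowth (Ψ : ℝ → ℝ) : Prop where
  contDiff : ContDiff ℝ 3 Ψ
  nonneg : ∀ x : ℝ, 0 ≤ x → 0 ≤ Ψ x
  deriv_pos : ∀ x : ℝ, 0 ≤ x → 0 < deriv Ψ x
  deriv2_nonneg : ∀ x : ℝ, 0 ≤ x → 0 ≤ deriv (deriv Ψ) x
  deriv3_nonneg : ∀ x : ℝ, 0 ≤ x → 0 ≤ deriv (deriv (deriv Ψ)) x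

/-- `Φ(x) = x Ψ'(x)`. -/
def Phi (Ψ : ℝ → ℝ) : ℝ → ℝ := fun x => x * deriv Ψ x

/-- Condition (⋆) with exponent `η`: `Φ''(t) = O(t^{-1/2} [Φ'(t)]^{1+η})` as `t → ∞`. -/
def StarCond (Ψ : ℝ → ℝ) (η : ℝ) : Prop :=
  (fun t : ℝ => deriv (deriv (Phi Ψ)) t) =O[atTop]
    fun t : ℝ => t ^ (-(1:ℝ)/2) * deriv (Phi Ψ) t ^ (1 + η)

/-- Condition (⋆⋆) with exponent `η`: `Ψ''(t) = O(t^{-1/2} [Ψ'(t)]^{1+η})` as `t → ∞`. -/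
def StarStarCond (Ψ : ℝ → ℝ) (η : ℝ) : Prop :=
  (fun t : ℝ => deriv (deriv Ψ) t) =O[atTop]
    fun t : ℝ => t ^ (-(1:ℝ)/2) * deriv Ψ t ^ (1 + η)

/-- The moments `s_d = ∫₀^∞ x^d e^{-Ψ(x)} dx`. -/
def sMom (Ψ : ℝ → ℝ) (d : ℕ) : ℝ := ∫ x in Ioi (0:ℝ), x ^ d * Real.exp (-(Ψ x))

/-- `F_s(ζ) = ∑ ζ^d / s_d`. -/
def Fs (Ψ : ℝ → ℝ) (ζ : ℂ) : ℂ := ∑' d : ℕ, ζ ^ d / (sMom Ψ d : ℂ)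

/-- The Bergman kernel `K_Ψ(z,w) = F_s^{(n-1)}(⟨z,w⟩)/(n-1)!`. -/
def K (Ψ : ℝ → ℝ) (n : ℕ) (z w : Fin n → ℂ) : ℂ :=
  (Nat.factorial (n - 1) : ℂ)⁻¹ * iteratedDeriv (n - 1) (Fs Ψ) (ip z w)

/-- The measure `dμ_Ψ = e^{-Ψ(|z|²)} dV`. -/
def fockMeasure (Ψ : ℝ → ℝ) (n : ℕ) : Measure (Fin n → ℂ) :=
  volume.withDensity fun z => ENNReal.ofReal (Real.exp (-(Ψ (nsq z))))

/-- `Λ_Ψ(z) = log K_Ψ(z,z)`. -/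
def LogK (Ψ : ℝ → ℝ) (n : ℕ) : (Fin n → ℂ) → ℝ := fun z => Real.log (K Ψ n z z).re

/-- The squared Bergman metric `β²(z,ξ) = ∑_{j,k} ∂²Λ_Ψ/∂z_j∂z̄_k ξ_j ξ̄_k`, expressed as the
Levi form of `Λ_Ψ`, i.e. one fourth of the sum of the real second derivatives in the
directions `ξ` and `iξ`. -/
def BergSq (Ψ : ℝ → ℝ) (n : ℕ) (z ξ : Fin n → ℂ) : ℝ :=
  (iteratedFDeriv ℝ 2 (LogK Ψ n) z ![ξ, ξ]
    + iteratedFDeriv ℝ 2 (LogK Ψ n) z ![Complex.I • ξ, Complex.I • ξ]) / 4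

/-- The Bergman metric `β(z,ξ)`. -/
def Bmet (Ψ : ℝ → ℝ) (n : ℕ) (z ξ : Fin n → ℂ) : ℝ := Real.sqrt (BergSq Ψ n z ξ)

/-- A piecewise `C¹`-smooth curve on `[0,1]`. -/
def PiecewiseC1 (γ : ℝ → (Fin n → ℂ)) : Prop :=
  ∃ (k : ℕ) (t : Fin (k + 1) → ℝ), t 0 = 0 ∧ t (Fin.last k) = 1 ∧ StrictMono t ∧
    ∀ i : Fin k, ContDiffOn ℝ 1 γ (Icc (t i.castSucc) (t i.succ))

/-- The Bergman distance `ϱ(z,w)`. -/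
def Bdist (Ψ : ℝ → ℝ) (n : ℕ) (z w : Fin n → ℂ) : ℝ :=
  sInf { L : ℝ | ∃ γ : ℝ → (Fin n → ℂ), PiecewiseC1 γ ∧ γ 0 = z ∧ γ 1 = w ∧
    L = ∫ s in (0:ℝ)..1, Bmet Ψ n (γ s) (deriv γ s) }

/-- The Bergman ball `B(z,a)`. -/
def Bball (Ψ : ℝ → ℝ) (n : ℕ) (z : Fin n → ℂ) (a : ℝ) : Set (Fin n → ℂ) :=
  { w | Bdist Ψ n z w < a }

/-- Berezin transform of a real-valued function. -/
def berezinR (Ψ : ℝ → ℝ) (n : ℕ) (g : (Fin n → ℂ) → ℝ) (z : Fin n → ℂ) : ℝ :=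
  (∫ w, g w * ‖K Ψ n z w‖ ^ 2 ∂(fockMeasure Ψ n)) / (K Ψ n z z).re

/-- Berezin transform of a complex-valued function. -/
def berezinC (Ψ : ℝ → ℝ) (n : ℕ) (f : (Fin n → ℂ) → ℂ) (z : Fin n → ℂ) : ℂ :=
  (∫ w, f w * ((‖K Ψ n z w‖ ^ 2 : ℝ) : ℂ) ∂(fockMeasure Ψ n)) / K Ψ n z z

/-- `MO f(z) = ((|f|²)~(z) - |f̃(z)|²)^{1/2}`. -/
def MO (Ψ : ℝ → ℝ) (n : ℕ) (f : (Fin n → ℂ) → ℂ) (z : Fin n → ℂ) : ℝ :=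
  Real.sqrt (berezinR Ψ n (fun w => Complex.normSq (f w)) z
    - Complex.normSq (berezinC Ψ n f z))

/-- `f ∈ BMOA(Ψ)`: `f` entire, `(|f|²)~(z)` finite for every `z`, and `sup_z MO f(z) < ∞`. -/
def InBMOA (Ψ : ℝ → ℝ) (n : ℕ) (f : (Fin n → ℂ) → ℂ) : Prop :=
  Differentiable ℂ f ∧
  (∀ z, Integrable (fun w => Complex.normSq (f w) * ‖K Ψ n z w‖ ^ 2)
    (fockMeasure Ψ n)) ∧
  ∃ C : ℝ, ∀ z, MO Ψ n f z ≤ C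

/-- `f ∈ ℬ(Ψ)`: `f` entire with `sup_z sup_{ξ≠0} |⟨∇f(z),ξ̄⟩|/β(z,ξ) < ∞`; here
`⟨∇f(z),ξ̄⟩ = ∑_j (∂f/∂z_j)(z) ξ_j` is the complex derivative of `f` at `z` along `ξ`. -/
def InBloch (Ψ : ℝ → ℝ) (n : ℕ) (f : (Fin n → ℂ) → ℂ) : Prop :=
  Differentiable ℂ f ∧
  ∃ C : ℝ, ∀ z ξ, ξ ≠ 0 → ‖fderiv ℂ f z ξ‖ ≤ C * Bmet Ψ n z ξ

/-- Holomorphic polynomials on `ℂⁿ`. -/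
def IsHolPoly (φ : (Fin n → ℂ) → ℂ) : Prop :=
  ∃ p : MvPolynomial (Fin n) ℂ, φ = fun z => MvPolynomial.eval z p

/-- The Hankel operator with symbol `f̄` applied to `φ`. -/
def hankel (Ψ : ℝ → ℝ) (n : ℕ) (f φ : (Fin n → ℂ) → ℂ) (z : Fin n → ℂ) : ℂ :=
  ∫ w, K Ψ n z w * φ w * ((starRingEnd ℂ) (f z) - (starRingEnd ℂ) (f w)) ∂(fockMeasure Ψ n)

/-- `f ∈ 𝒯(Ψ)`. -/
def InClassT (Ψ : ℝ → ℝ) (n : ℕ) (f : (Fin n → ℂ) → ℂ) : Prop :=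
  MemLp f 2 (fockMeasure Ψ n) ∧
  (∀ φ, IsHolPoly φ → ∀ z,
    Integrable (fun w => f w * φ w * K Ψ n z w) (fockMeasure Ψ n)) ∧
  ∀ φ, IsHolPoly φ → MemLp (hankel Ψ n f φ) 2 (fockMeasure Ψ n)

/-- The Hankel operator `H_{f̄}` is bounded on holomorphic polynomials. -/
def HankelBounded (Ψ : ℝ → ℝ) (n : ℕ) (f : (Fin n → ℂ) → ℂ) : Prop :=
  ∃ C : ℝ, ∀ φ, IsHolPoly φ →
    eLpNorm (hankel Ψ n f φ) 2 (fockMeasure Ψ n)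
      ≤ ENNReal.ofReal C * eLpNorm φ 2 (fockMeasure Ψ n)


/-- `θ₀(r) = [r Φ'(r)]^{-1/2}`. -/
def theta0 (Ψ : ℝ → ℝ) (r : ℝ) : ℝ := (r * deriv (Phi Ψ) r) ^ (-(1:ℝ)/2)

/-- The inverse of `Φ` on `[0,∞)`. -/
def PhiInv (Ψ : ℝ → ℝ) (t : ℝ) : ℝ := sInf {x : ℝ | 0 ≤ x ∧ t ≤ Phi Ψ x}

/-- `h_t(x) = -t log x + Ψ(x) - (-t log Φ⁻¹(t) + Ψ(Φ⁻¹(t)))`. -/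
def hCrit (Ψ : ℝ → ℝ) (t x : ℝ) : ℝ :=
  -t * Real.log x + Ψ x - (-t * Real.log (PhiInv Ψ t) + Ψ (PhiInv Ψ t))

/-- `I(t) = ∫₀^∞ e^{-h_t(x)} dx`. -/
def Ifun (Ψ : ℝ → ℝ) (t : ℝ) : ℝ := ∫ x in Ioi (0:ℝ), Real.exp (-(hCrit Ψ t x))

/-- `Q_x(r) = ½(Ψ(r²)+Ψ(x²)) - Ψ(xr)`. -/
def Qfun (Ψ : ℝ → ℝ) (x r : ℝ) : ℝ := (Ψ (r ^ 2) + Ψ (x ^ 2)) / 2 - Ψ (x * r)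

/-- The Taylor coefficients `c_d = (d+1)⋯(d+n-1)/((n-1)!·s_{d+n-1})` of `k`. -/
def cCoef (Ψ : ℝ → ℝ) (n d : ℕ) : ℝ :=
  (∏ j ∈ Finset.range (n - 1), ((d : ℝ) + 1 + (j : ℝ))) /
    ((Nat.factorial (n - 1) : ℝ) * sMom Ψ (d + (n - 1)))

/-- `k(r) = ∑_d c_d r^d`, so that `K_Ψ(z,z) = k(|z|²)`. -/
def kFun (Ψ : ℝ → ℝ) (n : ℕ) (r : ℝ) : ℝ := ∑' d : ℕ, cCoef Ψ n d * r ^ d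

/-- Orthogonal projection of `ℂⁿ` onto the complex line `ℂ z` (the identity if `z = 0`). -/
def Pproj (z w : Fin n → ℂ) : Fin n → ℂ :=
  if z = 0 then w else (ip w z / (nsq z : ℂ)) • z

/-- The ellipsoid `D(z,a)`. -/
def Dset (Ψ : ℝ → ℝ) (n : ℕ) (z : Fin n → ℂ) (a : ℝ) : Set (Fin n → ℂ) :=
  { w | Real.sqrt (nsq (z - Pproj z w)) ≤ a * deriv (Phi Ψ) (nsq z) ^ (-(1:ℝ)/2)
      ∧ Real.sqrt (nsq (w - Pproj z w)) ≤ a * deriv Ψ (nsq z) ^ (-(1:ℝ)/2) }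

/-- `r` is a covering radius for the sequence `(a_k)`: the balls `B(a_k,r)` cover `ℂⁿ` and
the balls `B(a_k,r/2)` are pairwise disjoint. -/
def IsCovRadius (Ψ : ℝ → ℝ) (n : ℕ) (a : ℕ → Fin n → ℂ) (r : ℝ) : Prop :=
  0 < r ∧ (∀ z, ∃ k, z ∈ Bball Ψ n (a k) r) ∧
    ∀ j k, j ≠ k → Disjoint (Bball Ψ n (a j) (r / 2)) (Bball Ψ n (a k) (r / 2))

/-- A `Ψ`-lattice: a sequence of distinct points admitting a covering radius. -/
def IsPsiLattice (Ψ : ℝ → ℝ) (n : ℕ) (a : ℕ → Fin n → ℂ) : Prop :=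
  Function.Injective a ∧ ∃ r, IsCovRadius Ψ n a r

/-- `r` is the maximal covering radius for `(a_k)`. -/
def IsMaxCovRadius (Ψ : ℝ → ℝ) (n : ℕ) (a : ℕ → Fin n → ℂ) (r : ℝ) : Prop :=
  IsCovRadius Ψ n a r ∧ ∀ r', IsCovRadius Ψ n a r' → r' ≤ r

/-- Membership in the Fock space `𝒜²(Ψ)`: `f` is entire, square-integrable, and lies in the
`L²(μ_Ψ)`-closure of the holomorphic polynomials. -/
def InA2 (Ψ : ℝ → ℝ) (n : ℕ) (f : (Fin n → ℂ) → ℂ) : Prop :=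
  Differentiable ℂ f ∧ MemLp f 2 (fockMeasure Ψ n) ∧
    ∀ ε : ℝ≥0∞, 0 < ε → ∃ φ, IsHolPoly φ ∧ eLpNorm (f - φ) 2 (fockMeasure Ψ n) < ε

/-- `H(z,w) = ϱ(z,w)|K_Ψ(z,w)|e^{-(Ψ(|z|²)+Ψ(|w|²))/2}`. -/
def Hker (Ψ : ℝ → ℝ) (n : ℕ) (z w : Fin n → ℂ) : ℝ :=
  Bdist Ψ n z w * ‖K Ψ n z w‖ * Real.exp (-(Ψ (nsq z) + Ψ (nsq w)) / 2)

/-- The set of `Lp`-classes of holomorphic polynomials. -/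
def polyLp (Ψ : ℝ → ℝ) (n : ℕ) : Set (Lp ℂ 2 (fockMeasure Ψ n)) :=
  {g | ∃ (φ : (Fin n → ℂ) → ℂ) (h : MemLp φ 2 (fockMeasure Ψ n)), IsHolPoly φ ∧ g = h.toLp φ}

/-- The Fock space `𝒜²(Ψ)` as the closure of the holomorphic polynomials in `L²(μ_Ψ)`. -/
def A2 (Ψ : ℝ → ℝ) (n : ℕ) : Submodule ℂ (Lp ℂ 2 (fockMeasure Ψ n)) :=
  (Submodule.span ℂ (polyLp Ψ n)).topologicalClosure

/-- The continuous extension of `H_{f̄}` from `𝒜²(Ψ)` to `L²(μ_Ψ)` is a compact operator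
(equivalently, some compact operator on `L²(μ_Ψ)` agrees with `H_{f̄}` on the holomorphic
polynomials). -/
def HankelCompact (Ψ : ℝ → ℝ) (n : ℕ) (f : (Fin n → ℂ) → ℂ) : Prop :=
  ∃ T : Lp ℂ 2 (fockMeasure Ψ n) →L[ℂ] Lp ℂ 2 (fockMeasure Ψ n),
    IsCompactOperator T ∧
    ∀ (φ : (Fin n → ℂ) → ℂ), IsHolPoly φ →
      ∀ (hφ : MemLp φ 2 (fockMeasure Ψ n)) (hH : MemLp (hankel Ψ n f φ) 2 (fockMeasure Ψ n)),
        T (hφ.toLp φ) = hH.toLp (hankel Ψ n f φ)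

/-- `f ∈ VMOA(Ψ)`: `f ∈ BMOA(Ψ)` and `MO f(z) → 0` as `|z| → ∞`. -/
def InVMOA (Ψ : ℝ → ℝ) (n : ℕ) (f : (Fin n → ℂ) → ℂ) : Prop :=
  InBMOA Ψ n f ∧
    ∀ ε : ℝ, 0 < ε → ∃ R : ℝ, ∀ z, R ≤ Real.sqrt (nsq z) → MO Ψ n f z ≤ ε

/-- `f ∈ ℬ₀(Ψ)`: `f ∈ ℬ(Ψ)` and `sup_{ξ≠0}|⟨∇f(z),ξ̄⟩|/β(z,ξ) → 0` as `|z| → ∞`. -/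
def InLittleBloch (Ψ : ℝ → ℝ) (n : ℕ) (f : (Fin n → ℂ) → ℂ) : Prop :=
  InBloch Ψ n f ∧
    ∀ ε : ℝ, 0 < ε → ∃ R : ℝ, ∀ z, R ≤ Real.sqrt (nsq z) →
      ∀ ξ, ξ ≠ 0 → ‖fderiv ℂ f z ξ‖ ≤ ε * Bmet Ψ n z ξ

/-!
Write `u = Φ'`, which is nondecreasing and bounded below by `Ψ'(0) > 0`. Condition (⋆) integrates
to `u(a)^{-η} ≤ u(t)^{-η} + 2ηC(√t - √a)` for `a ≤ t`, so `u ≥ 2^{-1/η} u(t)` on `[t - δ, t]`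
with `δ = min(t/2, u(t)^{-η}√t/(2ηC))`. As `Φ ≥ 0` is convex, `Φ(t) ≥ 2^{-1/η} u(t) δ`, and for
`η < 1/2` this gives `t Φ'(t) ≲ Φ(t)²`. Since `t Φ' ≥ t² Ψ''` and `Φ² = t² Ψ'²`, this is
`Ψ'' ≲ Ψ'²` for large `t`; on a bounded interval it follows from the monotonicity of `Ψ''`.
-/

section GrowthLemmas

variable {u F : ℝ → ℝ} {C η t₀ : ℝ}

lemma rpow_le_rpow_mul_rpow_of_le {c v a b : ℝ} (hc : 0 < c) (hcv : c ≤ v) (hab : a ≤ b) :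
    v ^ a ≤ c ^ (a - b) * v ^ b := by
  have hv : 0 < v := hc.trans_le hcv
  calc v ^ a = v ^ (a - b) * v ^ b := by rw [← Real.rpow_add hv, sub_add_cancel]
    _ ≤ c ^ (a - b) * v ^ b := mul_le_mul_of_nonneg_right
      (Real.rpow_le_rpow_of_nonpos hc hcv (sub_nonpos.2 hab)) (Real.rpow_nonneg hv.le b)

lemma monotoneOn_Ici_of_deriv_nonneg {f : ℝ → ℝ} {a : ℝ} (hf : Differentiable ℝ f)
    (h : ∀ x, a ≤ x → 0 ≤ deriv f x) : MonotoneOn f (Ici a) :=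
  monotoneOn_of_deriv_nonneg (convex_Ici a) hf.continuous.continuousOn hf.differentiableOn
    fun x hx => h x (interior_subset hx)

lemma sqrt_sub_sqrt_le_div_sqrt {a t : ℝ} (ha : 0 ≤ a) (hat : a ≤ t) (ht : 0 < t) :
    √t - √a ≤ (t - a) / √t := by
  have hst : 0 < √t := Real.sqrt_pos.2 ht
  have hsa : √a ≤ √t := Real.sqrt_le_sqrt hat
  rw [le_div_iff₀ hst]
  nlinarith [Real.sq_sqrt ha, Real.sq_sqrt ht.le, Real.sqrt_nonneg a]

/-- The bound on `u'` says exactly that `(u ^ (-η))' ≥ -η C s ^ (-1/2)`. -/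
lemma monotoneOn_rpow_neg_add_sqrt (hu : Differentiable ℝ u) (hη : 0 < η) (ht₀ : 0 < t₀)
    (hpos : ∀ s, t₀ ≤ s → 0 < u s)
    (hbound : ∀ s, t₀ ≤ s → deriv u s ≤ C * s ^ (-(1:ℝ)/2) * u s ^ (1 + η)) :
    MonotoneOn (fun s => u s ^ (-η) + 2 * η * C * √s) (Ici t₀) := by
  have hderiv : ∀ s, t₀ ≤ s → HasDerivAt (fun s => u s ^ (-η) + 2 * η * C * √s)
      (deriv u s * (-η) * u s ^ (-η - 1) + 2 * η * C * (1 / (2 * √s))) s := fun s hs =>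
    ((hu s).hasDerivAt.rpow_const (Or.inl (hpos s hs).ne')).add
      ((Real.hasDerivAt_sqrt (ht₀.trans_le hs).ne').const_mul _)
  refine monotoneOn_of_hasDerivWithinAt_nonneg (convex_Ici t₀)
    (fun s hs => (hderiv s hs).continuousAt.continuousWithinAt)
    (fun s hs => (hderiv s (interior_subset hs)).hasDerivWithinAt) fun s hs => ?_
  rw [interior_Ici] at hs
  have hs₀ : 0 < s := ht₀.trans hs
  have hus : 0 < u s := hpos s hs.le
  have hcancel : deriv u s * u s ^ (-η - 1) ≤ C * (√s)⁻¹ := by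
    calc deriv u s * u s ^ (-η - 1)
        ≤ C * s ^ (-(1:ℝ)/2) * u s ^ (1 + η) * u s ^ (-η - 1) := by
          gcongr
          exact hbound s hs.le
      _ = C * (√s)⁻¹ := by
          rw [mul_assoc, ← Real.rpow_add hus, show 1 + η + (-η - 1) = 0 by ring, Real.rpow_zero,
            mul_one, Real.sqrt_eq_rpow, ← Real.rpow_neg hs₀.le]
          norm_num
  have hsqrt : 0 < √s := Real.sqrt_pos.2 hs₀
  have : 2 * η * C * (1 / (2 * √s)) = η * (C * (√s)⁻¹) := by field_simp
  rw [this]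
  nlinarith [mul_le_mul_of_nonneg_left hcancel hη.le]

lemma two_rpow_neg_inv_mul_le (hu : Differentiable ℝ u) (hη : 0 < η) (ht₀ : 0 < t₀)
    (hpos : ∀ s, t₀ ≤ s → 0 < u s)
    (hbound : ∀ s, t₀ ≤ s → deriv u s ≤ C * s ^ (-(1:ℝ)/2) * u s ^ (1 + η))
    {a t : ℝ} (ha : t₀ ≤ a) (hat : a ≤ t) (hgap : 2 * η * C * (√t - √a) ≤ u t ^ (-η)) :
    2 ^ (-η⁻¹) * u t ≤ u a := by
  have hmono := monotoneOn_rpow_neg_add_sqrt hu hη ht₀ hpos hbound (mem_Ici.2 ha)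
    (mem_Ici.2 (ha.trans hat)) hat
  have hut := hpos t (ha.trans hat)
  have key : u a ^ (-η) ≤ (2 ^ (-η⁻¹) * u t) ^ (-η) := by
    rw [Real.mul_rpow (by positivity) hut.le, ← Real.rpow_mul zero_le_two,
      show -η⁻¹ * -η = 1 by field_simp, Real.rpow_one]
    simp only at hmono
    linarith
  exact (Real.rpow_le_rpow_iff_of_neg (hpos a ha) (by positivity) (neg_lt_zero.2 hη)).1 key

lemma two_rpow_neg_inv_mul_deriv_mul_min_le (hF : Differentiable ℝ F)
    (hF' : Differentiable ℝ (deriv F)) (hη : 0 < η) (hC : 0 < C) (ht₀ : 0 < t₀)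
    (hF₀ : ∀ s, t₀ ≤ s → 0 ≤ F s) (hpos : ∀ s, t₀ ≤ s → 0 < deriv F s)
    (hmono : MonotoneOn (deriv F) (Ici t₀))
    (hbound : ∀ s, t₀ ≤ s → deriv (deriv F) s ≤ C * s ^ (-(1:ℝ)/2) * deriv F s ^ (1 + η))
    {t : ℝ} (ht : 2 * t₀ ≤ t) :
    2 ^ (-η⁻¹) * deriv F t * min (t / 2) (deriv F t ^ (-η) * √t / (2 * η * C)) ≤ F t := by
  set δ := min (t / 2) (deriv F t ^ (-η) * √t / (2 * η * C)) with hδ_def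
  have htpos : 0 < t := by linarith
  have hδ : 0 < δ := lt_min (by linarith) (by have := hpos t (by linarith); positivity)
  have hδt : δ ≤ t / 2 := min_le_left _ _
  have hat₀ : t₀ ≤ t - δ := by linarith
  have hgap : 2 * η * C * (√t - √(t - δ)) ≤ deriv F t ^ (-η) := calc
    _ ≤ 2 * η * C * ((t - (t - δ)) / √t) := by
        gcongr
        exact sqrt_sub_sqrt_le_div_sqrt (by linarith) (by linarith) htpos
    _ ≤ 2 * η * C * (deriv F t ^ (-η) * √t / (2 * η * C) / √t) := by
        rw [sub_sub_cancel]
        gcongr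
        exact min_le_right _ _
    _ = deriv F t ^ (-η) := by
        have : 0 < √t := Real.sqrt_pos.2 htpos
        field_simp
  have hcomp := two_rpow_neg_inv_mul_le hF' hη ht₀ hpos hbound hat₀ (by linarith) hgap
  have hslope : deriv F (t - δ) * (t - (t - δ)) ≤ F t - F (t - δ) :=
    (convex_Icc (t - δ) t).mul_sub_le_image_sub_of_le_deriv hF.continuous.continuousOn
      hF.differentiableOn (fun x hx => hmono (mem_Ici.2 hat₀)
        (mem_Ici.2 (hat₀.trans (interior_subset hx).1)) (interior_subset hx).1)
      (t - δ) (left_mem_Icc.2 (by linarith)) t (right_mem_Icc.2 (by linarith)) (by linarith)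
  nlinarith [mul_le_mul_of_nonneg_right hcomp hδ.le, hF₀ (t - δ) hat₀]

lemma exists_mul_deriv_le_sq {c₀ : ℝ} (hF : Differentiable ℝ F)
    (hF' : Differentiable ℝ (deriv F)) (hη : 0 < η) (hη' : η < 1 / 2) (hC : 0 < C) (ht₀ : 0 < t₀)
    (hc₀ : 0 < c₀) (hF₀ : ∀ s, t₀ ≤ s → 0 ≤ F s) (hlow : ∀ s, t₀ ≤ s → c₀ ≤ deriv F s)
    (hmono : MonotoneOn (deriv F) (Ici t₀))
    (hbound : ∀ s, t₀ ≤ s → deriv (deriv F) s ≤ C * s ^ (-(1:ℝ)/2) * deriv F s ^ (1 + η)) :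
    ∃ K > 0, ∀ t, 2 * t₀ ≤ t → t * deriv F t ≤ K * F t ^ 2 := by
  set β : ℝ := 2 ^ (-η⁻¹)
  set κ := min (t₀ * c₀ / 2) (c₀ ^ (1 - 2 * η) / (2 * η * C) ^ 2)
  have hκ : 0 < κ := lt_min (by positivity) (by positivity)
  refine ⟨(β ^ 2 * κ)⁻¹, by positivity, fun t ht => ?_⟩
  have htpos : 0 < t := by linarith
  set v := deriv F t
  have hv : c₀ ≤ v := hlow t (by linarith)
  have hvpos : 0 < v := hc₀.trans_le hv
  set δ := min (t / 2) (v ^ (-η) * √t / (2 * η * C)) with hδ_def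
  have hlower : β * v * δ ≤ F t := two_rpow_neg_inv_mul_deriv_mul_min_le hF hF' hη hC ht₀ hF₀
    (fun s hs => hc₀.trans_le (hlow s hs)) hmono hbound ht
  -- `η < 1/2` enters here: `v ^ (1 - 2η)` stays bounded below
  have hδ : κ * t ≤ δ ^ 2 * v := by
    rcases min_cases (t / 2) (v ^ (-η) * √t / (2 * η * C)) with ⟨h, -⟩ | ⟨h, -⟩
    · rw [hδ_def, h]
      calc κ * t ≤ t₀ * c₀ / 2 * t := by gcongr; exact min_le_left _ _
        _ = t * (2 * t₀ * c₀) / 4 := by ring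
        _ ≤ t * (t * v) / 4 := by gcongr
        _ = (t / 2) ^ 2 * v := by ring
    · rw [hδ_def, h]
      calc κ * t ≤ c₀ ^ (1 - 2 * η) / (2 * η * C) ^ 2 * t := by gcongr; exact min_le_right _ _
        _ ≤ v ^ (1 - 2 * η) / (2 * η * C) ^ 2 * t := by gcongr; linarith
        _ = (v ^ (-η) * √t / (2 * η * C)) ^ 2 * v := by
          have hpow : v ^ (1 - 2 * η) = (v ^ (-η)) ^ 2 * v := by
            rw [← Real.rpow_mul_natCast hvpos.le, ← Real.rpow_add_one hvpos.ne']
            ring_nf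
          rw [div_pow (v ^ (-η) * √t), mul_pow (v ^ (-η)), Real.sq_sqrt htpos.le, hpow]
          ring
  rw [inv_mul_eq_div, le_div_iff₀ (by positivity)]
  calc t * v * (β ^ 2 * κ) = β ^ 2 * (κ * t) * v := by ring
    _ ≤ β ^ 2 * (δ ^ 2 * v) * v := by gcongr
    _ = (β * v * δ) ^ 2 := by ring
    _ ≤ F t ^ 2 := pow_le_pow_left₀ (by positivity) hlower 2

end GrowthLemmas

namespace IsLogGrowth

variable {Ψ : ℝ → ℝ} (hΨ : IsLogGrowth Ψ)
include hΨ

lemma contDiff_deriv : ContDiff ℝ 2 (deriv Ψ) :=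
  hΨ.contDiff.deriv'

lemma differentiable_deriv : Differentiable ℝ (deriv Ψ) :=
  hΨ.contDiff_deriv.differentiable two_ne_zero

lemma differentiable_deriv_deriv : Differentiable ℝ (deriv (deriv Ψ)) :=
  (hΨ.contDiff_deriv.deriv' (n := 1)).differentiable one_ne_zero

lemma hasDerivAt_phi (x : ℝ) :
    HasDerivAt (Phi Ψ) (deriv Ψ x + x * deriv (deriv Ψ) x) x :=
  ((hasDerivAt_id' x).fun_mul (hΨ.differentiable_deriv x).hasDerivAt).congr_deriv (by rw [one_mul])

lemma deriv_phi : deriv (Phi Ψ) = fun x => deriv Ψ x + x * deriv (deriv Ψ) x :=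
  funext fun x => (hΨ.hasDerivAt_phi x).deriv

lemma hasDerivAt_deriv_phi (x : ℝ) :
    HasDerivAt (deriv (Phi Ψ)) (2 * deriv (deriv Ψ) x + x * deriv (deriv (deriv Ψ)) x) x := by
  rw [hΨ.deriv_phi]
  exact ((hΨ.differentiable_deriv x).hasDerivAt.fun_add
    ((hasDerivAt_id' x).fun_mul (hΨ.differentiable_deriv_deriv x).hasDerivAt)).congr_deriv (by ring)

lemma monotoneOn_deriv : MonotoneOn (deriv Ψ) (Ici 0) :=
  monotoneOn_Ici_of_deriv_nonneg hΨ.differentiable_deriv hΨ.deriv2_nonneg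

lemma monotoneOn_deriv_deriv : MonotoneOn (deriv (deriv Ψ)) (Ici 0) :=
  monotoneOn_Ici_of_deriv_nonneg hΨ.differentiable_deriv_deriv hΨ.deriv3_nonneg

lemma monotoneOn_deriv_phi : MonotoneOn (deriv (Phi Ψ)) (Ici 0) :=
  monotoneOn_Ici_of_deriv_nonneg (fun x => (hΨ.hasDerivAt_deriv_phi x).differentiableAt)
    fun x hx => by
      rw [(hΨ.hasDerivAt_deriv_phi x).deriv]
      have := hΨ.deriv2_nonneg x hx
      have := mul_nonneg hx (hΨ.deriv3_nonneg x hx)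
      linarith

lemma deriv_zero_le_deriv {x : ℝ} (hx : 0 ≤ x) : deriv Ψ 0 ≤ deriv Ψ x :=
  hΨ.monotoneOn_deriv self_mem_Ici hx hx

lemma deriv_le_deriv_phi {x : ℝ} (hx : 0 ≤ x) : deriv Ψ x ≤ deriv (Phi Ψ) x := by
  rw [hΨ.deriv_phi]
  have := mul_nonneg hx (hΨ.deriv2_nonneg x hx)
  linarith

lemma phi_nonneg {x : ℝ} (hx : 0 ≤ x) : 0 ≤ Phi Ψ x :=
  mul_nonneg hx (hΨ.deriv_pos x hx).le

lemma exists_mul_deriv_phi_le_sq (hstar : ∃ η : ℝ, η < 1/2 ∧ StarCond Ψ η) :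
    ∃ K > 0, ∃ T > 0, ∀ t, T ≤ t → t * deriv (Phi Ψ) t ≤ K * Phi Ψ t ^ 2 := by
  obtain ⟨η, hη, hO⟩ := hstar
  obtain ⟨C, hC, hOC⟩ := hO.exists_pos
  obtain ⟨T, hT⟩ := eventually_atTop.1 hOC.bound
  set t₀ := max T 1
  -- as `Φ' ≥ Ψ'(0) > 0`, (⋆) persists when `η` is increased, so we may take `η > 0`
  set η₁ := max η (1 / 4)
  have ht₀ : 0 < t₀ := lt_max_of_lt_right one_pos
  have hc₀ : 0 < deriv Ψ 0 := hΨ.deriv_pos 0 le_rfl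
  have hlow : ∀ t, t₀ ≤ t → deriv Ψ 0 ≤ deriv (Phi Ψ) t := fun t ht =>
    (hΨ.deriv_zero_le_deriv (ht₀.le.trans ht)).trans (hΨ.deriv_le_deriv_phi (ht₀.le.trans ht))
  have hbound : ∀ t, t₀ ≤ t → deriv (deriv (Phi Ψ)) t ≤
      C * deriv Ψ 0 ^ (η - η₁) * t ^ (-(1:ℝ)/2) * deriv (Phi Ψ) t ^ (1 + η₁) := by
    intro t ht
    have hT' := hT t ((le_max_left T 1).trans ht)
    rw [Real.norm_eq_abs, Real.norm_eq_abs, abs_of_nonneg (mul_nonneg (Real.rpow_nonneg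
      (ht₀.le.trans ht) _) (Real.rpow_nonneg (hc₀.le.trans (hlow t ht)) _))] at hT'
    calc deriv (deriv (Phi Ψ)) t ≤ C * (t ^ (-(1:ℝ)/2) * deriv (Phi Ψ) t ^ (1 + η)) :=
          (le_abs_self _).trans hT'
      _ ≤ C * (t ^ (-(1:ℝ)/2) * (deriv Ψ 0 ^ (1 + η - (1 + η₁)) * deriv (Phi Ψ) t ^ (1 + η₁))) := by
          gcongr
          · exact Real.rpow_nonneg (ht₀.le.trans ht) _
          · exact rpow_le_rpow_mul_rpow_of_le hc₀ (hlow t ht) (by simp [η₁])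
      _ = C * deriv Ψ 0 ^ (η - η₁) * t ^ (-(1:ℝ)/2) * deriv (Phi Ψ) t ^ (1 + η₁) := by
          ring_nf
  obtain ⟨K, hK, hKb⟩ := exists_mul_deriv_le_sq (fun x => (hΨ.hasDerivAt_phi x).differentiableAt)
    (fun x => (hΨ.hasDerivAt_deriv_phi x).differentiableAt) (lt_max_of_lt_right (by norm_num))
    (max_lt hη (by norm_num)) (by positivity) ht₀ hc₀ (fun t ht => hΨ.phi_nonneg (ht₀.le.trans ht))
    hlow (hΨ.monotoneOn_deriv_phi.mono (Ici_subset_Ici.2 ht₀.le)) hbound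
  exact ⟨K, hK, 2 * t₀, by positivity, hKb⟩

lemma exists_deriv_deriv_le_sq {K T : ℝ} (hK : 0 < K) (hT : 0 < T)
    (hKT : ∀ t, T ≤ t → t * deriv (Phi Ψ) t ≤ K * Phi Ψ t ^ 2) :
    ∃ C : ℝ, 0 < C ∧ ∀ y : ℝ, 0 ≤ y → deriv (deriv Ψ) y ≤ C * deriv Ψ y ^ 2 := by
  set M := deriv (deriv Ψ) T / deriv Ψ 0 ^ 2
  have hc₀ : 0 < deriv Ψ 0 := hΨ.deriv_pos 0 le_rfl
  refine ⟨max K M, lt_max_of_lt_left hK, fun y hy => ?_⟩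
  rcases le_total y T with hyT | hTy
  · calc deriv (deriv Ψ) y ≤ deriv (deriv Ψ) T := hΨ.monotoneOn_deriv_deriv hy hT.le hyT
      _ = M * deriv Ψ 0 ^ 2 := (div_mul_cancel₀ _ (by positivity)).symm
      _ ≤ max K M * deriv Ψ y ^ 2 := by
        gcongr
        · exact le_max_right K M
        · exact hΨ.deriv_zero_le_deriv hy
  · have hy₀ : 0 < y := hT.trans_le hTy
    have hsq : y ^ 2 * deriv (deriv Ψ) y ≤ y ^ 2 * (K * deriv Ψ y ^ 2) :=
      calc y ^ 2 * deriv (deriv Ψ) y ≤ y * deriv (Phi Ψ) y := by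
            rw [hΨ.deriv_phi]
            nlinarith [hΨ.deriv_pos y hy]
        _ ≤ K * Phi Ψ y ^ 2 := hKT y hTy
        _ = y ^ 2 * (K * deriv Ψ y ^ 2) := by rw [Phi]; ring
    calc deriv (deriv Ψ) y ≤ K * deriv Ψ y ^ 2 := le_of_mul_le_mul_left hsq (by positivity)
      _ ≤ max K M * deriv Ψ y ^ 2 := by gcongr; exact le_max_left K M

end IsLogGrowth

/-- The estimate `Ψ''(y) ≲ [Ψ'(y)]²`, equivalently `Φ(t) ≳ t^{1/2}[Φ'(t)]^{1/2}`,
valid under condition (⋆). -/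
theorem psi_second_deriv_bound (Ψ : ℝ → ℝ) (hΨ : IsLogGrowth Ψ)
    (hstar : ∃ η : ℝ, η < 1/2 ∧ StarCond Ψ η) :
    (∃ C : ℝ, 0 < C ∧ ∀ y : ℝ, 0 ≤ y → deriv (deriv Ψ) y ≤ C * deriv Ψ y ^ 2) ∧
    (∃ C : ℝ, 0 < C ∧ ∀ᶠ t in atTop,
      Real.sqrt t * Real.sqrt (deriv (Phi Ψ) t) ≤ C * Phi Ψ t) := by
  obtain ⟨K, hK, T, hT, hKT⟩ := hΨ.exists_mul_deriv_phi_le_sq hstar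
  refine ⟨hΨ.exists_deriv_deriv_le_sq hK hT hKT, √K, Real.sqrt_pos.2 hK, ?_⟩
  filter_upwards [eventually_ge_atTop T] with t ht
  calc √t * √(deriv (Phi Ψ) t) = √(t * deriv (Phi Ψ) t) := (Real.sqrt_mul (hT.le.trans ht) _).symm
    _ ≤ √(K * Phi Ψ t ^ 2) := Real.sqrt_le_sqrt (hKT t ht)
    _ = √K * Phi Ψ t := by
      rw [Real.sqrt_mul hK.le, Real.sqrt_sq (hΨ.phi_nonneg (hT.le.trans ht))]

end FockHankel
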